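/- arXiv:2602.10449 — 3 statements merged into one kernel-verified Lean document; each statement's English description precedes it below -/
import Mathlib

section
/- Let F ∈ ℝ^{d×d} be symmetric positive semidefinite with rank r and compact eigendecomposition F = UΛUᵀ, where U ∈ ℝ^{d×r} has orthonormal columns spanning range(F) and Λ ∈ ℝ^{r×r} is positive definite diagonal, and let P ∈ ℝ^{m×d} be any matrix. Then: (i) τ̃_0(g,g′) = τ_0(g,g′) for all g, g′ ∈ range(F) if and only if rank(PU) = r (i.e., P is injective on range(F)); and (ii) if rank(PU) < r, then there exists g ∈ range(F) with g ≠ 0 such that τ_0(g,g) > 0 while τ̃_0(g,g) = 0, so no uniform multiplicative approximation guarantee |τ_0(g,g′) − τ̃_0(g,g′)| ≤ ε·τ_0(g,g′) over g, g′ ∈ range(F)\{0} can hold for any ε ∈ (0,1). -/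
open MeasureTheory ProbabilityTheory Matrix
open scoped Kronecker

noncomputable def evnorm {n : Type*} [Fintype n] (x : n → ℝ) : ℝ :=
  Real.sqrt (x ⬝ᵥ x)

noncomputable def eopNorm {m n : Type*} [Fintype m] [Fintype n] (A : Matrix m n ℝ) : ℝ :=
  sSup {c : ℝ | ∃ x : n → ℝ, evnorm x ≤ 1 ∧ c = evnorm (A *ᵥ x)}

open Classical in
noncomputable def moorePenrose {m n : Type*} [Fintype m] [Fintype n]
    (A : Matrix m n ℝ) : Matrix n m ℝ :=
  if h : ∃ B : Matrix n m ℝ,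
      A * B * A = A ∧ B * A * B = B ∧ (A * B)ᵀ = A * B ∧ (B * A)ᵀ = B * A
  then h.choose else 0

noncomputable def tau {d : Type*} [Fintype d] [DecidableEq d]
    (F : Matrix d d ℝ) (lam : ℝ) (g g' : d → ℝ) : ℝ :=
  if lam = 0 then g ⬝ᵥ (moorePenrose F *ᵥ g')
  else g ⬝ᵥ ((F + lam • 1)⁻¹ *ᵥ g')

noncomputable def tauP {d m' : Type*} [Fintype d] [DecidableEq d] [Fintype m'] [DecidableEq m']
    (F : Matrix d d ℝ) (P : Matrix m' d ℝ) (lam : ℝ) (g g' : d → ℝ) : ℝ :=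
  if lam = 0 then (P *ᵥ g) ⬝ᵥ (moorePenrose (P * F * Pᵀ) *ᵥ (P *ᵥ g'))
  else (P *ᵥ g) ⬝ᵥ ((P * F * Pᵀ + lam • 1)⁻¹ *ᵥ (P *ᵥ g'))

noncomputable def effDim {d : Type*} [Fintype d] [DecidableEq d]
    (F : Matrix d d ℝ) (lam : ℝ) : ℝ :=
  Matrix.trace (F * (F + lam • 1)⁻¹)

noncomputable def minPosEigenvalue {d : Type*} [Fintype d]
    (F : Matrix d d ℝ) : ℝ :=
  sInf {c : ℝ | 0 < c ∧ ∃ x : d → ℝ, x ≠ 0 ∧ F *ᵥ x = c • x}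

def IsObliviousSketch {Ω : Type*} [MeasurableSpace Ω] (μ : Measure Ω) (K : ℝ)
    {m d : ℕ} (P : Ω → Matrix (Fin m) (Fin d) ℝ) : Prop :=
  ∃ W : Fin m → Ω → (Fin d → ℝ),
    (∀ i, Measurable (W i)) ∧
    iIndepFun W μ ∧
    (∀ i j : Fin m, IdentDistrib (W i) (W j) μ μ) ∧
    (∀ i k, ∫ ω, W i ω k ∂μ = 0) ∧
    (∀ i k l, ∫ ω, W i ω k * W i ω l ∂μ = if k = l then 1 else 0) ∧
    (∀ i (t : ℝ) (v : Fin d → ℝ), evnorm v = 1 →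
      ∫ ω, Real.exp (t * (W i ω ⬝ᵥ v)) ∂μ ≤ Real.exp (K ^ 2 * t ^ 2 / 2)) ∧
    (∀ ω i k, P ω i k = (1 / Real.sqrt m) * W i ω k)

def vkron {a b : Type*} (x : a → ℝ) (y : b → ℝ) : a × b → ℝ := fun p => x p.1 * y p.2

/-!
Write `g = U x`, `g' = U y`. Whenever `X` has full column rank and `Λ` is invertible,
`(X Λ Xᵀ)† = X (XᵀX)⁻¹ Λ⁻¹ (XᵀX)⁻¹ Xᵀ`, hence `(X x)ᵀ (X Λ Xᵀ)† (X y) = xᵀ Λ⁻¹ y`.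
With `X = U` this gives `τ₀(U x, U y) = xᵀ Λ⁻¹ y`; since `P F Pᵀ = (P U) Λ (P U)ᵀ`, taking
`X = P U` gives the same value for `τ̃₀` as soon as `P U` is injective, i.e. `rank (P U) = r`.
Otherwise some `x ≠ 0` has `P U x = 0`, and `g = U x` satisfies `τ̃₀(g, g) = 0 < xᵀ Λ⁻¹ x = τ₀(g, g)`,
which no relative error `ε < 1` can absorb.
-/

def IsMoorePenroseInverse {m n : Type*} [Fintype m] [Fintype n]
    (A : Matrix m n ℝ) (B : Matrix n m ℝ) : Prop :=
  A * B * A = A ∧ B * A * B = B ∧ (A * B)ᵀ = A * B ∧ (B * A)ᵀ = B * A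

namespace IsMoorePenroseInverse

variable {m n : Type*} [Fintype m] [Fintype n] {A : Matrix m n ℝ} {B C : Matrix n m ℝ}

theorem unique (hB : IsMoorePenroseInverse A B) (hC : IsMoorePenroseInverse A C) : B = C := by
  obtain ⟨hABA, hBAB, hAB, hBA⟩ := hB
  obtain ⟨hACA, hCAC, hAC, hCA⟩ := hC
  have h_left : A * B = A * C :=
    calc A * B = ((A * B) * (A * C))ᵀ := by
          rw [transpose_mul, hAC, hAB, ← Matrix.mul_assoc, hACA]
      _ = A * C := by rw [← Matrix.mul_assoc, hABA, hAC]
  have h_right : B * A = C * A :=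
    calc B * A = ((C * A) * (B * A))ᵀ := by
          rw [transpose_mul, hCA, hBA, ← Matrix.mul_assoc, Matrix.mul_assoc B A C,
            Matrix.mul_assoc B, hACA]
      _ = C * A := by
          rw [← Matrix.mul_assoc, Matrix.mul_assoc C A B, Matrix.mul_assoc C, hABA, hCA]
  calc B = B * A * B := hBAB.symm
    _ = C * A * C := by rw [Matrix.mul_assoc, h_left, ← Matrix.mul_assoc, h_right]
    _ = C := hCAC

end IsMoorePenroseInverse

theorem moorePenrose_eq_of_isMoorePenroseInverse {m n : Type*} [Fintype m] [Fintype n]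
    {A : Matrix m n ℝ} {B : Matrix n m ℝ} (hB : IsMoorePenroseInverse A B) :
    moorePenrose A = B := by
  classical
  rw [moorePenrose, dif_pos ⟨B, hB⟩]
  exact IsMoorePenroseInverse.unique (Exists.choose_spec ⟨B, hB⟩) hB

section FullColumnRank

variable {n k : Type*} [Fintype n] [Fintype k] [DecidableEq k] {X : Matrix n k ℝ}

theorem Matrix.isUnit_transpose_mul_self (hX : Function.Injective X.mulVec) :
    IsUnit (Xᵀ * X) := by
  rw [← mulVec_injective_iff_isUnit, ← coe_mulVecLin, ← LinearMap.ker_eq_bot,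
    ker_mulVecLin_transpose_mul_self, LinearMap.ker_eq_bot, coe_mulVecLin]
  exact hX

theorem isMoorePenroseInverse_mul_mul_transpose (hX : Function.Injective X.mulVec)
    {Λ : Matrix k k ℝ} (hΛ : IsUnit Λ) :
    IsMoorePenroseInverse (X * Λ * Xᵀ) (X * (Xᵀ * X)⁻¹ * Λ⁻¹ * (Xᵀ * X)⁻¹ * Xᵀ) := by
  have hXX : IsUnit (Xᵀ * X).det := (isUnit_iff_isUnit_det _).1 (isUnit_transpose_mul_self hX)
  have hΛdet : IsUnit Λ.det := (isUnit_iff_isUnit_det _).1 hΛ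
  have h_inv_symm : ((Xᵀ * X)⁻¹)ᵀ = (Xᵀ * X)⁻¹ := by
    rw [transpose_nonsing_inv, transpose_mul, transpose_transpose]
  have hG_left (Y : Matrix k n ℝ) : (Xᵀ * X)⁻¹ * (Xᵀ * (X * Y)) = Y := by
    rw [← Matrix.mul_assoc Xᵀ, nonsing_inv_mul_cancel_left _ Y hXX]
  have hG_right (Y : Matrix k n ℝ) : Xᵀ * (X * ((Xᵀ * X)⁻¹ * Y)) = Y := by
    rw [← Matrix.mul_assoc, mul_nonsing_inv_cancel_left _ Y hXX]
  have hΛ_left (Y : Matrix k n ℝ) : Λ⁻¹ * (Λ * Y) = Y :=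
    nonsing_inv_mul_cancel_left _ Y hΛdet
  have hΛ_right (Y : Matrix k n ℝ) : Λ * (Λ⁻¹ * Y) = Y :=
    mul_nonsing_inv_cancel_left _ Y hΛdet
  -- both products are the orthogonal projection `X (XᵀX)⁻¹ Xᵀ` onto the column space of `X`
  have hAB : X * Λ * Xᵀ * (X * (Xᵀ * X)⁻¹ * Λ⁻¹ * (Xᵀ * X)⁻¹ * Xᵀ) = X * (Xᵀ * X)⁻¹ * Xᵀ := by
    simp only [Matrix.mul_assoc, hG_right, hΛ_right]
  have hBA : X * (Xᵀ * X)⁻¹ * Λ⁻¹ * (Xᵀ * X)⁻¹ * Xᵀ * (X * Λ * Xᵀ) = X * (Xᵀ * X)⁻¹ * Xᵀ := by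
    simp only [Matrix.mul_assoc, hG_left, hΛ_left]
  have h_proj_symm : (X * (Xᵀ * X)⁻¹ * Xᵀ)ᵀ = X * (Xᵀ * X)⁻¹ * Xᵀ := by
    rw [transpose_mul, transpose_mul, transpose_transpose, h_inv_symm, Matrix.mul_assoc]
  refine ⟨?_, ?_, by rw [hAB, h_proj_symm], by rw [hBA, h_proj_symm]⟩
  · rw [hAB]; simp only [Matrix.mul_assoc, hG_left]
  · rw [hBA]; simp only [Matrix.mul_assoc, hG_left]

theorem dotProduct_moorePenrose_mul_mul_transpose_mulVec (hX : Function.Injective X.mulVec)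
    {Λ : Matrix k k ℝ} (hΛ : IsUnit Λ) (x y : k → ℝ) :
    (X *ᵥ x) ⬝ᵥ (moorePenrose (X * Λ * Xᵀ) *ᵥ (X *ᵥ y)) = x ⬝ᵥ (Λ⁻¹ *ᵥ y) := by
  have hXX : IsUnit (Xᵀ * X).det := (isUnit_iff_isUnit_det _).1 (isUnit_transpose_mul_self hX)
  rw [moorePenrose_eq_of_isMoorePenroseInverse (isMoorePenroseInverse_mul_mul_transpose hX hΛ),
    mulVec_mulVec, dotProduct_mulVec, ← vecMul_transpose, vecMul_vecMul, ← dotProduct_mulVec]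
  congr 2
  simp only [← Matrix.mul_assoc]
  rw [mul_nonsing_inv _ hXX, Matrix.one_mul, Matrix.mul_assoc _ Xᵀ X, Matrix.mul_assoc,
    nonsing_inv_mul _ hXX, Matrix.mul_one]

end FullColumnRank

theorem Matrix.rank_eq_card_width_iff {m n K : Type*} [Fintype n] [Field K] (A : Matrix m n K) :
    A.rank = Fintype.card n ↔ Function.Injective A.mulVec := by
  rw [mulVec_injective_iff, linearIndependent_iff_card_eq_finrank_span, rank_eq_finrank_span_cols,
    eq_comm]
  rfl

theorem Matrix.exists_mulVec_eq_zero_of_rank_lt {m n K : Type*} [Fintype n] [Field K]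
    {A : Matrix m n K} (h : A.rank < Fintype.card n) : ∃ x ≠ 0, A *ᵥ x = 0 := by
  by_contra! h_ker
  refine h.ne ((A.rank_eq_card_width_iff).2 ?_)
  exact (injective_iff_map_eq_zero A.mulVecLin).2 fun x hx ↦ not_imp_not.1 (h_ker x) hx

section CompactEigendecomposition

variable {d r m : Type*} [Fintype d] [DecidableEq d] [Fintype r] [DecidableEq r] [Fintype m]
  [DecidableEq m] {F : Matrix d d ℝ} {U : Matrix d r ℝ} {Λ : Matrix r r ℝ}

theorem tau_zero_mulVec_mulVec (hF : F = U * Λ * Uᵀ) (hU : Function.Injective U.mulVec)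
    (hΛ : IsUnit Λ) (x y : r → ℝ) : tau F 0 (U *ᵥ x) (U *ᵥ y) = x ⬝ᵥ (Λ⁻¹ *ᵥ y) := by
  rw [tau, if_pos rfl, hF, dotProduct_moorePenrose_mul_mul_transpose_mulVec hU hΛ]

theorem tau_zero_mulVec_self_pos (hF : F = U * Λ * Uᵀ) (hU : Function.Injective U.mulVec)
    (hΛ : Λ.PosDef) {x : r → ℝ} (hx : x ≠ 0) : 0 < tau F 0 (U *ᵥ x) (U *ᵥ x) := by
  rw [tau_zero_mulVec_mulVec hF hU hΛ.isUnit]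
  simpa using hΛ.inv.dotProduct_mulVec_pos hx

theorem tauP_zero_mulVec_mulVec (hF : F = U * Λ * Uᵀ) (hU : Function.Injective U.mulVec)
    (hΛ : IsUnit Λ) {P : Matrix m d ℝ} (hPU : Function.Injective (P * U).mulVec) (x y : r → ℝ) :
    tauP F P 0 (U *ᵥ x) (U *ᵥ y) = tau F 0 (U *ᵥ x) (U *ᵥ y) := by
  have hPFP : P * F * Pᵀ = (P * U) * Λ * (P * U)ᵀ := by
    simp only [hF, transpose_mul, Matrix.mul_assoc]
  rw [tauP, if_pos rfl, hPFP, mulVec_mulVec x P U, mulVec_mulVec y P U,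
    dotProduct_moorePenrose_mul_mul_transpose_mulVec hPU hΛ, tau_zero_mulVec_mulVec hF hU hΛ]

end CompactEigendecomposition

theorem tauP_zero_of_mulVec_eq_zero {d m : Type*} [Fintype d] [DecidableEq d] [Fintype m]
    [DecidableEq m] (F : Matrix d d ℝ) {P : Matrix m d ℝ} {g : d → ℝ} (hg : P *ᵥ g = 0)
    (g' : d → ℝ) : tauP F P 0 g g' = 0 := by
  simp [tauP, hg]

theorem stmt0_general {d r m : ℕ} (F : Matrix (Fin d) (Fin d) ℝ)
    (U : Matrix (Fin d) (Fin r) ℝ) (Λ : Matrix (Fin r) (Fin r) ℝ)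
    (hUortho : Uᵀ * U = 1) (hΛpd : Λ.PosDef)
    (hdecomp : F = U * Λ * Uᵀ)
    (hUrange : Set.range U.mulVec = Set.range F.mulVec)
    (P : Matrix (Fin m) (Fin d) ℝ) :
    ((∀ g g' : Fin d → ℝ, g ∈ Set.range F.mulVec → g' ∈ Set.range F.mulVec →
        tauP F P 0 g g' = tau F 0 g g') ↔ (P * U).rank = r)
    ∧ ((P * U).rank < r →
        (∃ g ∈ Set.range F.mulVec, g ≠ 0 ∧ 0 < tau F 0 g g ∧ tauP F P 0 g g = 0)
        ∧ ∀ ε : ℝ, ε ∈ Set.Ioo (0 : ℝ) 1 →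
          ¬ (∀ g g' : Fin d → ℝ, g ∈ Set.range F.mulVec → g' ∈ Set.range F.mulVec →
              g ≠ 0 → g' ≠ 0 →
              |tau F 0 g g' - tauP F P 0 g g'| ≤ ε * tau F 0 g g')) := by
  have hU : Function.Injective U.mulVec :=
    Function.LeftInverse.injective (g := Uᵀ.mulVec) fun x ↦ by
      rw [mulVec_mulVec, hUortho, one_mulVec]
  have h_collapse : (P * U).rank < r →
      ∃ g ∈ Set.range F.mulVec, g ≠ 0 ∧ 0 < tau F 0 g g ∧ tauP F P 0 g g = 0 := by
    intro hlt
    obtain ⟨x, hx, hPUx⟩ := exists_mulVec_eq_zero_of_rank_lt (A := P * U) (by simpa using hlt)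
    refine ⟨U *ᵥ x, hUrange ▸ ⟨x, rfl⟩, fun h ↦ hx (hU (h.trans (mulVec_zero U).symm)),
      tau_zero_mulVec_self_pos hdecomp hU hΛpd hx, tauP_zero_of_mulVec_eq_zero F ?_ _⟩
    rwa [mulVec_mulVec]
  refine ⟨⟨fun h_eq ↦ ?_, fun hr ↦ ?_⟩, fun hlt ↦ ⟨h_collapse hlt, fun ε hε h_approx ↦ ?_⟩⟩
  · by_contra hne
    obtain ⟨g, hg, -, h_pos, h_zero⟩ := h_collapse ((P * U).rank_le_width.lt_of_ne hne)
    exact h_pos.ne' ((h_eq g g hg hg).symm.trans h_zero)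
  · rw [← hUrange]
    rintro _ _ ⟨x, rfl⟩ ⟨y, rfl⟩
    exact tauP_zero_mulVec_mulVec hdecomp hU hΛpd.isUnit
      ((rank_eq_card_width_iff _).1 (by simpa using hr)) x y
  · obtain ⟨g, hg, hg0, h_pos, h_zero⟩ := h_collapse hlt
    have := h_approx g g hg hg hg0 hg0
    rw [h_zero, sub_zero, abs_of_pos h_pos] at this
    exact (mul_lt_of_lt_one_left h_pos hε.2).not_ge this

theorem stmt0 {d r m : ℕ} (F : Matrix (Fin d) (Fin d) ℝ) (hF : F.PosSemidef)
    (hrank : F.rank = r)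
    (U : Matrix (Fin d) (Fin r) ℝ) (Λ : Matrix (Fin r) (Fin r) ℝ)
    (hUortho : Uᵀ * U = 1) (hΛdiag : Λ.IsDiag) (hΛpd : Λ.PosDef)
    (hdecomp : F = U * Λ * Uᵀ)
    (hUrange : Set.range U.mulVec = Set.range F.mulVec)
    (P : Matrix (Fin m) (Fin d) ℝ) :
    ((∀ g g' : Fin d → ℝ, g ∈ Set.range F.mulVec → g' ∈ Set.range F.mulVec →
        tauP F P 0 g g' = tau F 0 g g') ↔ (P * U).rank = r)
    ∧ ((P * U).rank < r →
        (∃ g ∈ Set.range F.mulVec, g ≠ 0 ∧ 0 < tau F 0 g g ∧ tauP F P 0 g g = 0)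
        ∧ ∀ ε : ℝ, ε ∈ Set.Ioo (0 : ℝ) 1 →
          ¬ (∀ g g' : Fin d → ℝ, g ∈ Set.range F.mulVec → g' ∈ Set.range F.mulVec →
              g ≠ 0 → g' ≠ 0 →
              |tau F 0 g g' - tauP F P 0 g g'| ≤ ε * tau F 0 g g')) :=
  stmt0_general F U Λ hUortho hΛpd hdecomp hUrange P
end

section
/- Let F ∈ ℝ^{d×d} be symmetric positive semidefinite, λ > 0, ε ∈ (0,1), and let P ∈ ℝ^{m×d} be any (deterministic) matrix. Define B := F^{1/2}(F+λI_d)^{−1/2} and G := F^{1/2}PᵀPF^{1/2}. If ‖Bᵀ(PᵀP − I_d)B‖₂ ≤ ε/2, then ‖F(F+λI_d)⁻¹ − G(G+λI_d)⁻¹‖₂ ≤ ε. -/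
open MeasureTheory ProbabilityTheory Matrix
open scoped Kronecker

/-- The PSD square root as defined in Mathlib (Dec 2024), `Matrix.PosSemidef.sqrt`. -/
noncomputable def psdSqrt {n : Type*} [Fintype n] [DecidableEq n]
    {A : Matrix n n ℝ} (hA : A.PosSemidef) : Matrix n n ℝ :=
  hA.1.eigenvectorUnitary.1 * diagonal ((↑) ∘ (√·) ∘ hA.1.eigenvalues) *
  (star hA.1.eigenvectorUnitary : Matrix n n ℝ)

/-!
Write `S = (F + λI)^{1/2}` and `M = Bᵀ(PᵀP - I)B`. Since `SBᵀ = BS = F^{1/2}`, we get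
`G + λI = S(I + M)S`, hence
`F(F + λI)⁻¹ - G(G + λI)⁻¹ = λ(G + λI)⁻¹ - λ(F + λI)⁻¹ = λ S⁻¹((I + M)⁻¹ - I)S⁻¹`.
As `‖M‖ ≤ ε/2 < 1`, the Neumann series gives `‖(I + M)⁻¹ - I‖ ≤ ‖M‖/(1 - ‖M‖) ≤ ε`,
and `S² = F + λI ⪰ λI` gives `λ‖S⁻¹‖² ≤ 1`.
-/

open scoped MatrixOrder Matrix.Norms.L2Operator

lemma isUnit_one_add_of_norm_lt_one {R : Type*} [NormedRing R] [HasSummableGeomSeries R]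
    {x : R} (hx : ‖x‖ < 1) : IsUnit (1 + x) := by
  simpa using isUnit_one_sub_of_norm_lt_one (x := -x) (by rwa [norm_neg])

lemma norm_ringInverse_one_add_sub_one_le {R : Type*} [NormedRing R] [HasSummableGeomSeries R]
    {x : R} (hx : ‖x‖ < 1) : ‖Ring.inverse (1 + x) - 1‖ ≤ ‖x‖ / (1 - ‖x‖) := by
  set y := Ring.inverse (1 + x) - 1
  have hy : y = -x - x * y := by
    have := Ring.mul_inverse_cancel _ (isUnit_one_add_of_norm_lt_one hx)
    simp only [y, mul_sub, mul_one]
    linear_combination (norm := noncomm_ring) this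
  have : ‖y‖ ≤ ‖x‖ + ‖x‖ * ‖y‖ := by
    calc ‖y‖ = ‖-x - x * y‖ := by rw [← hy]
      _ ≤ ‖x‖ + ‖x‖ * ‖y‖ := by
        grw [norm_sub_le, norm_neg, norm_mul_le]
  rw [le_div_iff₀ (by linarith)]
  linarith

section EuclideanNorm

variable {n : Type*} [Fintype n]

lemma evnorm_eq_norm (x : n → ℝ) : evnorm x = ‖WithLp.toLp 2 x‖ := by
  rw [evnorm, EuclideanSpace.norm_eq]
  simp [dotProduct, sq]

lemma norm_toLp_sq_eq_dotProduct (v : n → ℝ) : ‖WithLp.toLp 2 v‖ ^ 2 = v ⬝ᵥ v := by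
  rw [← evnorm_eq_norm, evnorm, Real.sq_sqrt (by simpa using dotProduct_star_self_nonneg v)]

lemma eopNorm_eq_l2_opNorm {m : Type*} [Fintype m] [DecidableEq n] (A : Matrix m n ℝ) :
    eopNorm A = ‖A‖ := by
  rw [eopNorm, l2_opNorm_def, ← ContinuousLinearMap.sSup_unitClosedBall_eq_norm]
  congr 1
  ext c
  simp only [Set.mem_ofPred_eq, Set.mem_image, Metric.mem_closedBall, dist_zero_right]
  constructor
  · rintro ⟨x, hx, rfl⟩
    refine ⟨WithLp.toLp 2 x, by rwa [← evnorm_eq_norm], ?_⟩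
    simp [evnorm_eq_norm]
  · rintro ⟨x, hx, rfl⟩
    exact ⟨x.ofLp, by rwa [evnorm_eq_norm], by rw [evnorm_eq_norm]; rfl⟩

end EuclideanNorm

section psdSqrt

variable {n : Type*} [Fintype n] [DecidableEq n] {A : Matrix n n ℝ}

lemma psdSqrt_eq_sqrt (hA : A.PosSemidef) : psdSqrt hA = CFC.sqrt A := by
  rw [CFC.sqrt_eq_real_sqrt A hA.nonneg, cfcₙ_eq_cfc, hA.1.cfc_eq, IsHermitian.cfc,
    Unitary.conjStarAlgAut_apply]
  rfl

lemma psdSqrt_mul_self (hA : A.PosSemidef) : psdSqrt hA * psdSqrt hA = A := by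
  rw [psdSqrt_eq_sqrt]
  exact CFC.sqrt_mul_sqrt_self A hA.nonneg

lemma psdSqrt_transpose (hA : A.PosSemidef) : (psdSqrt hA)ᵀ = psdSqrt hA := by
  rw [psdSqrt_eq_sqrt, ← conjTranspose_eq_transpose_of_trivial]
  exact (CFC.sqrt_nonneg A).posSemidef.isHermitian.eq

end psdSqrt

namespace Matrix

lemma l2_opNorm_inv_sq_le {n : Type*} [Fintype n] [DecidableEq n] {S : Matrix n n ℝ}
    (hS : IsUnit S) {c : ℝ} (hc : 0 < c) (hSS : (Sᵀ * S - c • 1).PosSemidef) :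
    c * ‖S⁻¹‖ ^ 2 ≤ 1 := by
  have hlow (y : n → ℝ) : √c * ‖WithLp.toLp 2 y‖ ≤ ‖WithLp.toLp 2 (S *ᵥ y)‖ := by
    refine le_of_sq_le_sq ?_ (norm_nonneg _)
    have := hSS.dotProduct_mulVec_nonneg y
    rw [mul_pow, Real.sq_sqrt hc.le, norm_toLp_sq_eq_dotProduct, norm_toLp_sq_eq_dotProduct]
    simpa [sub_mulVec, smul_mulVec, dotProduct_mulVec, ← mulVec_mulVec, vecMul_transpose]
      using this
  have hinv : ‖S⁻¹‖ ≤ (√c)⁻¹ := by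
    rw [cstar_norm_def]
    refine ContinuousLinearMap.opNorm_le_bound _ (by positivity) fun x => ?_
    rw [inv_mul_eq_div, le_div_iff₀' (by positivity)]
    have hx : S *ᵥ (S⁻¹ *ᵥ x.ofLp) = x.ofLp := by
      rw [mulVec_mulVec, mul_nonsing_inv _ ((isUnit_iff_isUnit_det S).mp hS), one_mulVec]
    change √c * ‖WithLp.toLp 2 (S⁻¹ *ᵥ x.ofLp)‖ ≤ ‖x‖
    simpa [hx] using hlow (S⁻¹ *ᵥ x.ofLp)
  calc c * ‖S⁻¹‖ ^ 2 ≤ c * (√c)⁻¹ ^ 2 := by gcongr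
    _ = 1 := by rw [inv_pow, Real.sq_sqrt hc.le, mul_inv_cancel₀ hc.ne']

variable {n α : Type*} [Fintype n] [DecidableEq n] [CommRing α]

lemma mul_inv_add_smul_one {A : Matrix n n α} (c : α) (h : IsUnit (A + c • 1)) :
    A * (A + c • 1)⁻¹ = 1 - c • (A + c • 1)⁻¹ := by
  rw [eq_sub_iff_add_eq]
  calc A * (A + c • 1)⁻¹ + c • (A + c • 1)⁻¹ = (A + c • 1) * (A + c • 1)⁻¹ := by
        rw [Matrix.add_mul, Matrix.smul_mul, Matrix.one_mul]
    _ = 1 := mul_nonsing_inv _ ((isUnit_iff_isUnit_det _).mp h)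

lemma mul_inv_add_smul_one_sub_eq {F G S N : Matrix n n α} {c : α} (hS : IsUnit S)
    (hN : IsUnit N) (hF : S * S = F + c • 1) (hG : S * N * S = G + c • 1) :
    F * (F + c • 1)⁻¹ - G * (G + c • 1)⁻¹ = c • (S⁻¹ * (N⁻¹ - 1) * S⁻¹) := by
  rw [mul_inv_add_smul_one c (hF ▸ hS.mul hS), mul_inv_add_smul_one c (hG ▸ (hS.mul hN).mul hS),
    ← hF, ← hG, mul_inv_rev, mul_inv_rev, mul_inv_rev]
  simp only [Matrix.mul_sub, Matrix.sub_mul, Matrix.mul_one, smul_sub, Matrix.mul_assoc]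
  abel

lemma mul_one_add_transpose_mul_mul_mul_eq {R S B Q : Matrix n n α} (hR : Rᵀ = R) (hS : Sᵀ = S)
    (hSu : IsUnit S) (hB : B = R * S⁻¹) :
    S * (1 + Bᵀ * (Q - 1) * B) * S = S * S + R * Q * R - R * R := by
  have hdet := (isUnit_iff_isUnit_det S).mp hSu
  subst hB
  rw [transpose_mul, transpose_nonsing_inv, hR, hS]
  simp only [Matrix.mul_add, Matrix.add_mul, Matrix.mul_sub, Matrix.sub_mul, Matrix.mul_one,
    Matrix.mul_assoc, mul_nonsing_inv_cancel_left _ _ hdet, nonsing_inv_mul_cancel_right _ _ hdet]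
  abel

end Matrix

theorem stmt10 {d m : ℕ} (F : Matrix (Fin d) (Fin d) ℝ) (hF : F.PosSemidef)
    (lam ε : ℝ) (hlam : 0 < lam) (hε : ε ∈ Set.Ioo (0 : ℝ) 1)
    (P : Matrix (Fin m) (Fin d) ℝ)
    (hFl : (F + lam • 1).PosSemidef)
    (B G : Matrix (Fin d) (Fin d) ℝ)
    (hB : B = psdSqrt hF * (psdSqrt hFl)⁻¹)
    (hG : G = psdSqrt hF * Pᵀ * P * psdSqrt hF)
    (hyp : eopNorm (Bᵀ * (Pᵀ * P - 1) * B) ≤ ε / 2) :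
    eopNorm (F * (F + lam • 1)⁻¹ - G * (G + lam • 1)⁻¹) ≤ ε := by
  obtain ⟨hε0, hε1⟩ := hε
  set S := psdSqrt hFl
  set M := Bᵀ * (Pᵀ * P - 1) * B
  have hSS : S * S = F + lam • 1 := psdSqrt_mul_self hFl
  have hSu : IsUnit S := isUnit_of_mul_isUnit_left <| hSS ▸
    (add_comm (lam • 1) F ▸ ((PosDef.one.smul hlam).add_posSemidef hF)).isUnit
  have hMε : ‖M‖ ≤ ε / 2 := by rwa [← eopNorm_eq_l2_opNorm]
  have hM : ‖M‖ < 1 := by linarith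
  have hK : S * (1 + M) * S = G + lam • 1 := by
    rw [mul_one_add_transpose_mul_mul_mul_eq (psdSqrt_transpose hF) (psdSqrt_transpose hFl)
      hSu hB, hSS, psdSqrt_mul_self hF, hG]
    simp only [Matrix.mul_assoc]
    abel
  have hSinv : lam * ‖S⁻¹‖ ^ 2 ≤ 1 :=
    l2_opNorm_inv_sq_le hSu hlam (by rwa [psdSqrt_transpose, hSS, add_sub_cancel_right])
  rw [eopNorm_eq_l2_opNorm,
    mul_inv_add_smul_one_sub_eq hSu (isUnit_one_add_of_norm_lt_one hM) hSS hK,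
    nonsing_inv_eq_ringInverse (1 + M)]
  calc ‖lam • (S⁻¹ * (Ring.inverse (1 + M) - 1) * S⁻¹)‖
      ≤ lam * ‖S⁻¹‖ ^ 2 * ‖Ring.inverse (1 + M) - 1‖ := by
        rw [norm_smul, Real.norm_of_nonneg hlam.le]
        nlinarith [norm_mul₃_le (a := S⁻¹) (b := Ring.inverse (1 + M) - 1) (c := S⁻¹)]
    _ ≤ ‖M‖ / (1 - ‖M‖) := by
        nlinarith [norm_ringInverse_one_add_sub_one_le hM, norm_nonneg (Ring.inverse (1 + M) - 1)]
    _ ≤ ε / 2 / (1 - ε / 2) := by gcongr; linarith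
    _ ≤ ε := by rw [div_le_iff₀ (by linarith)]; nlinarith
end

section
/- Let F, G ∈ ℝ^{d×d} be symmetric positive semidefinite, λ > 0, and ε ∈ (0,1). If (1−ε)F ⪯ G ⪯ (1+ε)F in the Loewner order, then ‖G(G+λI_d)⁻¹ − F(F+λI_d)⁻¹‖₂ ≤ ε. -/
open MeasureTheory ProbabilityTheory Matrix
open scoped Kronecker

/-!
Since `X (X + λ)⁻¹ = 1 - λ (X + λ)⁻¹`, the matrix in question is `λ ((F + λ)⁻¹ - (G + λ)⁻¹)`, and a
symmetric matrix squeezed between `-ε` and `ε` in the Loewner order has operator norm at most `ε`.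
Antitonicity of the inverse replaces `G` by `(1 ± ε) F`, after which only functions of `F` remain:
for those the bound is the scalar inequality `λ ((s x + λ)⁻¹ - (t x + λ)⁻¹) ≤ t - s` on `x ≥ 0`
(valid when `0 ≤ s ≤ t` and `s + t ≥ 1`), transported by the continuous functional calculus.
-/

open scoped MatrixOrder ComplexOrder

lemma mul_inv_sub_inv_le {s t c x : ℝ} (hs : 0 ≤ s) (hst : s ≤ t) (hst_one : 1 ≤ s + t)
    (hc : 0 < c) (hx : 0 ≤ x) : c * ((s * x + c)⁻¹ - (t * x + c)⁻¹) ≤ t - s := by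
  have hsx : 0 < s * x + c := by positivity
  have htx : 0 < t * x + c := by nlinarith
  have key : c * x ≤ (s * x + c) * (t * x + c) := by
    nlinarith [mul_nonneg (mul_nonneg hs (hs.trans hst)) (mul_nonneg hx hx), mul_nonneg hc.le hx]
  rw [inv_sub_inv hsx.ne' htx.ne', mul_div_assoc', div_le_iff₀ (by positivity)]
  nlinarith [mul_le_mul_of_nonneg_left key (sub_nonneg.2 hst)]

namespace Matrix

variable {n : Type*} [DecidableEq n]

lemma PosSemidef.posDef_add_smul_one {F : Matrix n n ℝ} (hF : F.PosSemidef) {c : ℝ} (hc : 0 < c) :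
    (F + c • 1).PosDef :=
  PosDef.posSemidef_add hF (PosDef.one.smul hc)

variable [Fintype n]

lemma PosDef.inv_le_inv_of_le {𝕜 : Type*} [RCLike 𝕜] {B C : Matrix n n 𝕜} (hC : C.PosDef)
    (h : C ≤ B) : B⁻¹ ≤ C⁻¹ := by
  have hB : B.PosDef := by simpa using hC.add_posSemidef h
  have := hB.isUnit.invertible
  have := hC.inv.isUnit.invertible
  have hC' : C⁻¹⁻¹ = C := nonsing_inv_nonsing_inv C ((isUnit_iff_isUnit_det C).1 hC.isUnit)
  -- Both inequalities are Schur-complement conditions for the block matrix [[B, 1], [1, C⁻¹]].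
  have hblock : (fromBlocks B 1 1ᴴ C⁻¹).PosSemidef :=
    (PosDef.fromBlocks₂₂ B 1 hC.inv).2 (by simpa [hC'] using le_iff.1 h)
  simpa [le_iff] using (PosDef.fromBlocks₁₁ 1 C⁻¹ hB).1 hblock

lemma mul_add_smul_one_inv {K : Type*} [Field K] {F : Matrix n n K} {c : K}
    (h : IsUnit (F + c • 1).det) : F * (F + c • 1)⁻¹ = 1 - c • (F + c • 1)⁻¹ := by
  rw [eq_sub_iff_add_eq, ← smul_one_mul c (F + c • 1)⁻¹, ← add_mul, mul_nonsing_inv _ h]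

lemma smul_add_smul_one_inv_eq_cfc {F : Matrix n n ℝ} (hF : 0 ≤ F) {s c : ℝ} (hs : 0 ≤ s)
    (hc : 0 < c) : (s • F + c • 1)⁻¹ = cfc (fun x => (s * x + c)⁻¹) F := by
  have haffine : cfc (fun x => s * x + c) F = s • F + c • 1 := by
    rw [cfc_add F (s * ·) (fun _ => c), cfc_const_mul_id s F hF.isSelfAdjoint,
      cfc_const c F hF.isSelfAdjoint, Algebra.algebraMap_eq_smul_one]
  rw [cfc_inv (fun x => s * x + c) F, haffine, nonsing_inv_eq_ringInverse]
  intro x hx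
  have := spectrum_nonneg_of_nonneg hF hx
  positivity

lemma smul_inv_sub_inv_le {F : Matrix n n ℝ} (hF : 0 ≤ F) {s t c : ℝ} (hs : 0 ≤ s)
    (hst : s ≤ t) (hst_one : 1 ≤ s + t) (hc : 0 < c) :
    c • ((s • F + c • 1)⁻¹ - (t • F + c • 1)⁻¹) ≤ (t - s) • (1 : Matrix n n ℝ) := by
  have hcont (f : ℝ → ℝ) : ContinuousOn f (spectrum ℝ F) := F.finite_real_spectrum.continuousOn f
  rw [smul_add_smul_one_inv_eq_cfc hF hs hc, smul_add_smul_one_inv_eq_cfc hF (hs.trans hst) hc,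
    ← cfc_sub _ _ F (hcont _) (hcont _), ← cfc_smul c _ F (hcont _),
    ← Algebra.algebraMap_eq_smul_one]
  exact cfc_le_algebraMap _ _ _ (fun x hx => mul_inv_sub_inv_le hs hst hst_one hc
    (spectrum_nonneg_of_nonneg hF hx)) (hcont _)

end Matrix

lemma eopNorm_le_of_transpose_mul_self_le {m n : Type*} [Fintype m] [Fintype n] [DecidableEq n]
    {A : Matrix m n ℝ} {c : ℝ} (hc : 0 ≤ c) (h : Aᵀ * A ≤ c ^ 2 • (1 : Matrix n n ℝ)) :
    eopNorm A ≤ c := by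
  refine Real.sSup_le ?_ hc
  rintro _ ⟨x, hx, rfl⟩
  have hxx : x ⬝ᵥ x ≤ 1 := by
    rwa [evnorm, Real.sqrt_le_one] at hx
  have hquad := (Matrix.le_iff.1 h).dotProduct_mulVec_nonneg x
  simp only [star_trivial, sub_mulVec, smul_mulVec, one_mulVec, dotProduct_sub,
    dotProduct_smul, smul_eq_mul, ← mulVec_mulVec, dotProduct_mulVec x Aᵀ,
    vecMul_transpose] at hquad
  calc evnorm (A *ᵥ x) ≤ √(c ^ 2) := Real.sqrt_le_sqrt (by nlinarith)
    _ = c := Real.sqrt_sq hc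

lemma eopNorm_le_of_neg_le_of_le {n : Type*} [Fintype n] [DecidableEq n] {D : Matrix n n ℝ}
    {c : ℝ} (hc : 0 ≤ c) (hlow : -(c • 1) ≤ D) (hup : D ≤ c • 1) : eopNorm D ≤ c := by
  have hD : Dᵀ = D := by
    simpa using ((Matrix.isHermitian_one.smul (IsSelfAdjoint.all c)).sub
      (Matrix.le_iff.1 hup).isHermitian).eq
  refine eopNorm_le_of_transpose_mul_self_le hc ?_
  have hcomm : Commute (c • 1 - D) (c • 1 + D) :=
    ((Commute.one_right _).smul_right c).add_right
      (((Commute.one_left D).smul_left c).sub_left (Commute.refl D))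
  have hprod := hcomm.mul_nonneg (sub_nonneg.2 hup) (by simpa [neg_le_iff_add_nonneg'] using hlow)
  rw [hD, ← sub_nonneg]
  convert hprod using 1
  simp only [sub_mul, mul_add, one_mul, mul_one, smul_mul_assoc, mul_smul_comm]
  module

theorem stmt11 {d : ℕ} (F G : Matrix (Fin d) (Fin d) ℝ)
    (hF : F.PosSemidef) (hG : G.PosSemidef)
    (lam ε : ℝ) (hlam : 0 < lam) (hε : ε ∈ Set.Ioo (0 : ℝ) 1)
    (h1 : (G - (1 - ε) • F).PosSemidef) (h2 : ((1 + ε) • F - G).PosSemidef) :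
    eopNorm (G * (G + lam • 1)⁻¹ - F * (F + lam • 1)⁻¹) ≤ ε := by
  obtain ⟨hε0, hε1⟩ := hε
  rw [← Matrix.le_iff] at h1 h2
  have hA := hF.posDef_add_smul_one hlam
  have hB := hG.posDef_add_smul_one hlam
  rw [Matrix.mul_add_smul_one_inv hA.det_pos.ne'.isUnit,
    Matrix.mul_add_smul_one_inv hB.det_pos.ne'.isUnit, sub_sub_sub_cancel_left, ← smul_sub]
  refine eopNorm_le_of_neg_le_of_le hε0.le ?_ ?_
  · have hinv := ((hF.smul (by linarith : 0 ≤ 1 - ε)).posDef_add_smul_one hlam).inv_le_inv_of_le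
      (add_le_add_left h1 (lam • 1))
    rw [neg_le, ← smul_neg, neg_sub]
    calc lam • ((G + lam • 1)⁻¹ - (F + lam • 1)⁻¹)
        ≤ lam • (((1 - ε) • F + lam • 1)⁻¹ - (F + lam • 1)⁻¹) :=
          smul_le_smul_of_nonneg_left (sub_le_sub_right hinv _) hlam.le
      _ ≤ ε • 1 := by
          simpa using Matrix.smul_inv_sub_inv_le hF.nonneg (s := 1 - ε) (t := 1) (by linarith)
            (by linarith) (by linarith) hlam
  · have hinv := hB.inv_le_inv_of_le (add_le_add_left h2 (lam • 1))
    calc lam • ((F + lam • 1)⁻¹ - (G + lam • 1)⁻¹)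
        ≤ lam • ((F + lam • 1)⁻¹ - ((1 + ε) • F + lam • 1)⁻¹) :=
          smul_le_smul_of_nonneg_left (sub_le_sub_left hinv _) hlam.le
      _ ≤ ε • 1 := by
          simpa using Matrix.smul_inv_sub_inv_le hF.nonneg (s := 1) (t := 1 + ε) zero_le_one
            (by linarith) (by linarith) hlam
end
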